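/- arXiv:1310.6166 — 6 statements merged into one kernel-verified Lean document; each statement's English description precedes it below -/
import Mathlib

section
/- Let θ : Ω → Ω be an invertible ergodic measure-preserving transformation of a non-atomic probability space (Ω, 𝓕, ℙ). Then there exists a measurable function a : Ω → (0, ∞) such that the discrete-time scalar linear cocycle Φ over θ generated by a satisfies the integrability conditions E[ln⁺ Φ(1, ·)] < ∞ and E[ln⁺ (Φ(1, ·)⁻¹)] < ∞, while its dichotomy spectrum is unbounded from above and unbounded from below. -/
open MeasureTheory Filter

noncomputable section

variable {Ω : Type*} [MeasurableSpace Ω]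

/-- The ℤ-action generated by an invertible map `θ` with inverse `θinv`. -/
def zIter (θ θinv : Ω → Ω) : ℤ → Ω → Ω
  | Int.ofNat m, ω => θ^[m] ω
  | Int.negSucc m, ω => θinv^[m + 1] ω

/-- The discrete-time scalar linear cocycle generated by `a : Ω → (0, ∞)` over the
invertible map `θ` (with inverse `θinv`): `Φ(n, ω) = a(θ^{n-1} ω) ⋯ a(ω)` for `n ≥ 1`,
`Φ(0, ω) = 1`, and `Φ(n, ω) = a(θ^{-1} ω)⁻¹ ⋯ a(θ^{n} ω)⁻¹` for `n ≤ -1`. -/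
def scalarCocycle (θ θinv : Ω → Ω) (a : Ω → ℝ) : ℤ → Ω → ℝ
  | Int.ofNat m, ω => ∏ i ∈ Finset.range m, a (θ^[i] ω)
  | Int.negSucc m, ω => (∏ i ∈ Finset.range (m + 1), a (θinv^[i + 1] ω))⁻¹

/-- The discrete-time scalar cocycle `Φ` over `θ` admits an exponential dichotomy with
growth rate `γ`: there are an invariant projector `P` and constants `a > 0`, `K ≥ 1` with,
almost surely, `|Φ(n,ω) P(ω)| ≤ K e^{(γ-a) n}` for `n ≥ 0` and
`|Φ(n,ω)(1 - P(ω))| ≤ K e^{(γ+a) n}` for `n ≤ 0`. -/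
def ScalarAdmitsED (ℙ : Measure Ω) (θ θinv : Ω → Ω) (Φ : ℤ → Ω → ℝ) (γ : ℝ) : Prop :=
  ∃ P : Ω → ℝ, Measurable P ∧ (∀ ω, P ω * P ω = P ω) ∧
    (∀ (n : ℤ) (ω : Ω), P (zIter θ θinv n ω) * Φ n ω = Φ n ω * P ω) ∧
    ∃ a > (0:ℝ), ∃ K ≥ (1:ℝ), ∀ᵐ ω ∂ℙ,
      (∀ n : ℤ, 0 ≤ n → |Φ n ω * P ω| ≤ K * Real.exp ((γ - a) * (n : ℝ))) ∧
      (∀ n : ℤ, n ≤ 0 → |Φ n ω * (1 - P ω)| ≤ K * Real.exp ((γ + a) * (n : ℝ)))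

/-- `ln⁺ x = max {0, ln x}`. -/
def posLog (x : ℝ) : ℝ := max (Real.log x) 0

/-!
Split `Ω` into two sets `B`, `Bᶜ` of positive measure and, by repeated halving, choose in each a
decreasing chain of sets of positive, summable measures. Counting how many sets of the chain in
`B` contain `ω`, minus the same count for `Bᶜ`, gives an integrable `g` that is essentially
unbounded from above and from below; take `a = exp g`.

For an exponential dichotomy, the projector is idempotent and `θ`-invariant, hence by ergodicity
a.e. `1` or a.e. `0`. In the first case the bound at `n = 1` makes `a` essentially bounded, in the
second the bound at `n = -1` makes `a⁻¹` essentially bounded. So no growth rate admits a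
dichotomy: the dichotomy spectrum is all of `ℝ`.
-/

open scoped ENNReal

/-- Atomless in the measure-theoretic sense; Mathlib's `NoAtoms` only asks singletons to be
null. -/
def IsAtomless (μ : Measure Ω) : Prop :=
  ∀ A : Set Ω, MeasurableSet A → 0 < μ A → ∃ B ⊆ A, MeasurableSet B ∧ 0 < μ B ∧ μ B < μ A

section Halving

variable {μ : Measure Ω}

lemma IsAtomless.exists_subset_pos_le_half [IsFiniteMeasure μ] (hμ : IsAtomless μ) {A : Set Ω}
    (hA : MeasurableSet A) (hpos : 0 < μ A) :
    ∃ B ⊆ A, MeasurableSet B ∧ 0 < μ B ∧ μ B ≤ μ A / 2 := by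
  obtain ⟨B, hBA, hB, hBpos, hBlt⟩ := hμ A hA hpos
  by_cases hB2 : μ B ≤ μ A / 2
  · exact ⟨B, hBA, hB, hBpos, hB2⟩
  have hdiff : μ (A \ B) = μ A - μ B :=
    measure_sdiff hBA hB.nullMeasurableSet (measure_ne_top μ B)
  refine ⟨A \ B, Set.sdiff_subset, hA.diff hB, hdiff ▸ tsub_pos_of_lt hBlt, ?_⟩
  rw [hdiff, tsub_le_iff_right]
  calc μ A = μ A / 2 + μ A / 2 := (ENNReal.add_halves _).symm
    _ ≤ μ A / 2 + μ B := by gcongr; exact (not_le.1 hB2).le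

lemma IsAtomless.exists_antitone_pos_summable [IsFiniteMeasure μ] (hμ : IsAtomless μ)
    {S : Set Ω} (hS : MeasurableSet S) (hpos : 0 < μ S) :
    ∃ A : ℕ → Set Ω, Antitone A ∧ A 0 = S ∧ (∀ k, MeasurableSet (A k)) ∧
      (∀ k, 0 < μ (A k)) ∧ ∑' k, μ (A k) ≠ ∞ := by
  have halve (T : {T : Set Ω // MeasurableSet T ∧ 0 < μ T}) :
      ∃ T' : {T : Set Ω // MeasurableSet T ∧ 0 < μ T}, T'.1 ⊆ T.1 ∧ μ T'.1 ≤ μ T.1 / 2 := by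
    obtain ⟨B, hBT, hB, hBpos, hBle⟩ := hμ.exists_subset_pos_le_half T.2.1 T.2.2
    exact ⟨⟨B, hB, hBpos⟩, hBT, hBle⟩
  choose F hFsub hFle using halve
  let A : ℕ → Set Ω := fun k => (F^[k] ⟨S, hS, hpos⟩).1
  have hsucc (k : ℕ) : A (k + 1) = (F (F^[k] ⟨S, hS, hpos⟩)).1 := by
    simp only [A, Function.iterate_succ_apply']
  have hle (k : ℕ) : μ (A k) ≤ μ S * 2⁻¹ ^ k := by
    induction k with
    | zero => simp [A]
    | succ k ih =>
      calc μ (A (k + 1)) ≤ μ (A k) / 2 := hsucc k ▸ hFle _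
        _ ≤ μ S * 2⁻¹ ^ k / 2 := by gcongr
        _ = μ S * 2⁻¹ ^ (k + 1) := by rw [pow_succ, ← mul_assoc, div_eq_mul_inv]
  refine ⟨A, antitone_nat_of_succ_le fun k => hsucc k ▸ hFsub _, rfl,
    fun k => (F^[k] _).2.1, fun k => (F^[k] _).2.2, ?_⟩
  refine ne_top_of_le_ne_top ?_ (ENNReal.tsum_le_tsum hle)
  rw [ENNReal.tsum_mul_left, ENNReal.tsum_geometric, ENNReal.one_sub_inv_two, inv_inv]
  exact ENNReal.mul_ne_top (measure_ne_top μ S) ENNReal.ofNat_ne_top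

end Halving

section MemCount

variable {α : Type*}

def memCount (A : ℕ → Set α) (x : α) : ℝ≥0∞ := ∑' k, (A k).indicator 1 x

variable {A : ℕ → Set α}

lemma natCast_add_one_le_memCount (hA : Antitone A) {k : ℕ} {x : α} (hx : x ∈ A k) :
    ((k + 1 : ℕ) : ℝ≥0∞) ≤ memCount A x :=
  calc ((k + 1 : ℕ) : ℝ≥0∞) = ∑ j ∈ Finset.range (k + 1), (A j).indicator 1 x := by
        rw [Finset.sum_congr rfl fun j hj =>
          Set.indicator_of_mem (hA (Nat.lt_succ_iff.1 (Finset.mem_range.1 hj)) hx) _]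
        simp
    _ ≤ memCount A x := ENNReal.sum_le_tsum _

lemma memCount_eq_zero (hA : Antitone A) {x : α} (hx : x ∉ A 0) : memCount A x = 0 := by
  simp [memCount, Set.indicator_of_notMem (fun h => hx (hA (Nat.zero_le _) h))]

end MemCount

section EssentiallyUnbounded

variable {μ : Measure Ω} {A : ℕ → Set Ω}

lemma measurable_memCount (hA : ∀ k, MeasurableSet (A k)) : Measurable (memCount A) :=
  Measurable.tsum fun k => measurable_one.indicator (hA k)

lemma lintegral_memCount (hA : ∀ k, MeasurableSet (A k)) :
    ∫⁻ ω, memCount A ω ∂μ = ∑' k, μ (A k) := by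
  simp only [memCount]
  rw [lintegral_tsum fun k => (measurable_one.indicator (hA k)).aemeasurable]
  exact tsum_congr fun k => lintegral_indicator_one (hA k)

lemma integrable_toReal_memCount (hA : ∀ k, MeasurableSet (A k))
    (hsum : ∑' k, μ (A k) ≠ ∞) : Integrable (fun ω => (memCount A ω).toReal) μ :=
  integrable_toReal_of_lintegral_ne_top (measurable_memCount hA).aemeasurable
    (by rwa [lintegral_memCount hA])

lemma not_ae_toReal_memCount_le (hAa : Antitone A) (hA : ∀ k, MeasurableSet (A k))
    (hpos : ∀ k, 0 < μ (A k)) (hsum : ∑' k, μ (A k) ≠ ∞) (C : ℝ) :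
    ¬ ∀ᵐ ω ∂μ, (memCount A ω).toReal ≤ C := by
  intro hC
  obtain ⟨k, hk⟩ := exists_nat_gt C
  have hfin : ∀ᵐ ω ∂μ, memCount A ω < ∞ :=
    ae_lt_top (measurable_memCount hA) (by rwa [lintegral_memCount hA])
  refine (hpos k).ne' (measure_eq_zero_iff_ae_notMem.2 ?_)
  filter_upwards [hC, hfin] with ω hωC hωfin hωA
  have hcount : ((k + 1 : ℕ) : ℝ) ≤ (memCount A ω).toReal := by
    simpa only [ENNReal.toReal_natCast] using
      ENNReal.toReal_mono hωfin.ne (natCast_add_one_le_memCount hAa hωA)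
  push_cast at hcount
  linarith

lemma not_ae_sub_le {f₁ f₂ : Ω → ℝ} (hf₁ : ∀ C, ¬ ∀ᵐ ω ∂μ, f₁ ω ≤ C)
    (hdisj : ∀ ω, f₁ ω = 0 ∨ f₂ ω = 0) (C : ℝ) : ¬ ∀ᵐ ω ∂μ, f₁ ω - f₂ ω ≤ C := by
  intro h
  apply hf₁ (max C 0)
  filter_upwards [h] with ω hω
  rcases hdisj ω with h0 | h0
  · exact h0 ▸ le_max_right C 0
  · rw [h0, sub_zero] at hω
    exact hω.trans (le_max_left C 0)

theorem IsAtomless.exists_integrable_not_ae_le [IsFiniteMeasure μ] [NeZero μ]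
    (hμ : IsAtomless μ) :
    ∃ g : Ω → ℝ, Measurable g ∧ Integrable g μ ∧
      (∀ C, ¬ ∀ᵐ ω ∂μ, g ω ≤ C) ∧ ∀ C, ¬ ∀ᵐ ω ∂μ, -g ω ≤ C := by
  obtain ⟨B, -, hB, hBpos, hBlt⟩ := hμ Set.univ MeasurableSet.univ (NeZero.pos _)
  have hBcpos : 0 < μ Bᶜ := by
    rw [measure_compl hB (measure_ne_top μ B)]
    exact tsub_pos_of_lt hBlt
  obtain ⟨A, hAa, hA0, hA, hApos, hAsum⟩ := hμ.exists_antitone_pos_summable hB hBpos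
  obtain ⟨A', hAa', hA0', hA', hApos', hAsum'⟩ := hμ.exists_antitone_pos_summable hB.compl hBcpos
  set f := fun ω => (memCount A ω).toReal
  set f' := fun ω => (memCount A' ω).toReal
  have hdisj (ω : Ω) : f ω = 0 ∨ f' ω = 0 := by
    by_cases hω : ω ∈ B
    · exact Or.inr (by simp [f', memCount_eq_zero hAa' (by simpa [hA0'] using hω)])
    · exact Or.inl (by simp [f, memCount_eq_zero hAa (by simpa [hA0] using hω)])
  refine ⟨fun ω => f ω - f' ω, (measurable_memCount hA).ennreal_toReal.sub
      (measurable_memCount hA').ennreal_toReal,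
    (integrable_toReal_memCount hA hAsum).sub (integrable_toReal_memCount hA' hAsum'),
    not_ae_sub_le (not_ae_toReal_memCount_le hAa hA hApos hAsum) hdisj, ?_⟩
  simpa only [neg_sub] using
    not_ae_sub_le (not_ae_toReal_memCount_le hAa' hA' hApos' hAsum') fun ω => (hdisj ω).symm

lemma not_ae_exp_le {g : Ω → ℝ} (hg : ∀ C, ¬ ∀ᵐ ω ∂μ, g ω ≤ C) (C : ℝ) :
    ¬ ∀ᵐ ω ∂μ, Real.exp (g ω) ≤ C := fun h =>
  hg (Real.log C) (h.mono fun _ hω => (Real.le_log_iff_exp_le ((Real.exp_pos _).trans_le hω)).2 hω)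

end EssentiallyUnbounded

section Cocycle

variable {α : Type*} {θ θinv : α → α} {a : α → ℝ}

lemma zIter_one (x : α) : zIter θ θinv 1 x = θ x := rfl

lemma scalarCocycle_one (x : α) : scalarCocycle θ θinv a 1 x = a x := by
  simp [scalarCocycle]

lemma scalarCocycle_neg_one (x : α) : scalarCocycle θ θinv a (-1) x = (a (θinv x))⁻¹ := by
  change scalarCocycle θ θinv a (Int.negSucc 0) x = _
  simp [scalarCocycle]

end Cocycle

section Dichotomy

variable {μ : Measure Ω} {θ θinv : Ω → Ω} {a : Ω → ℝ}

lemma ae_eq_zero_or_ae_eq_one_of_idempotent_invariant [IsProbabilityMeasure μ]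
    (herg : ∀ A : Set Ω, MeasurableSet A → θ ⁻¹' A = A → μ A = 0 ∨ μ A = 1) {P : Ω → ℝ}
    (hP : Measurable P) (hidem : ∀ ω, P ω * P ω = P ω) (hinv : ∀ ω, P (θ ω) = P ω) :
    (∀ᵐ ω ∂μ, P ω = 0) ∨ ∀ᵐ ω ∂μ, P ω = 1 := by
  have hA : MeasurableSet {ω | P ω = 1} := hP (measurableSet_singleton 1)
  rcases herg _ hA (by ext ω; simp [hinv]) with h0 | h1
  · refine Or.inl ((measure_eq_zero_iff_ae_notMem.1 h0).mono fun ω hω => ?_)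
    exact ((IsIdempotentElem.iff_eq_zero_or_one.1 (hidem ω)).resolve_right hω)
  · exact Or.inr ((mem_ae_iff_prob_eq_one hA).2 h1)

theorem not_scalarAdmitsED [IsProbabilityMeasure μ] (hθ : MeasurePreserving θ μ μ)
    (hli : Function.LeftInverse θinv θ)
    (herg : ∀ A : Set Ω, MeasurableSet A → θ ⁻¹' A = A → μ A = 0 ∨ μ A = 1)
    (ha : ∀ ω, a ω ≠ 0) (hup : ∀ C, ¬ ∀ᵐ ω ∂μ, a ω ≤ C)
    (hdown : ∀ C, ¬ ∀ᵐ ω ∂μ, (a ω)⁻¹ ≤ C) (γ : ℝ) :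
    ¬ ScalarAdmitsED μ θ θinv (scalarCocycle θ θinv a) γ := by
  rintro ⟨P, hPm, hPidem, hPinv, α, -, K, -, hbound⟩
  have hPθ (ω : Ω) : P (θ ω) = P ω := by
    refine mul_right_cancel₀ (ha ω) ?_
    simpa only [zIter_one, scalarCocycle_one, mul_comm (a ω)] using hPinv 1 ω
  rcases ae_eq_zero_or_ae_eq_one_of_idempotent_invariant herg hPm hPidem hPθ with hP0 | hP1
  · apply hdown (K * Real.exp ((γ + α) * ((-1 : ℤ) : ℝ)))
    -- read the backward bound at `θ ω`, where `Φ(-1, θ ω) = a(ω)⁻¹`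
    filter_upwards [hθ.quasiMeasurePreserving.ae hbound, hP0] with ω hω hPω
    have h := hω.2 (-1) (by norm_num)
    rw [scalarCocycle_neg_one, hli ω, hPθ, hPω, sub_zero, mul_one] at h
    exact (le_abs_self _).trans h
  · apply hup (K * Real.exp ((γ - α) * ((1 : ℤ) : ℝ)))
    filter_upwards [hbound, hP1] with ω hω hPω
    have h := hω.1 1 zero_le_one
    rw [scalarCocycle_one, hPω, mul_one] at h
    exact (le_abs_self _).trans h

end Dichotomy

lemma posLog_exp (x : ℝ) : posLog (Real.exp x) = max x 0 := by
  rw [posLog, Real.log_exp]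

theorem exists_integrable_cocycle_with_unbounded_spectrum_general
    {Ω : Type*} [MeasurableSpace Ω] (ℙ : Measure Ω) [IsProbabilityMeasure ℙ]
    (θ θinv : Ω → Ω)
    (hli : Function.LeftInverse θinv θ)
    (hpres : MeasurePreserving θ ℙ ℙ)
    (herg : ∀ A : Set Ω, MeasurableSet A → θ ⁻¹' A = A → ℙ A = 0 ∨ ℙ A = 1)
    (hna : ∀ A : Set Ω, MeasurableSet A → 0 < ℙ A →
      ∃ B ⊆ A, MeasurableSet B ∧ 0 < ℙ B ∧ ℙ B < ℙ A) :
    ∃ a : Ω → ℝ, Measurable a ∧ (∀ ω, 0 < a ω) ∧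
      Integrable (fun ω => posLog (a ω)) ℙ ∧
      Integrable (fun ω => posLog ((a ω)⁻¹)) ℙ ∧
      (∀ c : ℝ, ∃ γ > c, ¬ ScalarAdmitsED ℙ θ θinv (scalarCocycle θ θinv a) γ) ∧
      (∀ c : ℝ, ∃ γ < c, ¬ ScalarAdmitsED ℙ θ θinv (scalarCocycle θ θinv a) γ) := by
  obtain ⟨g, hgm, hgi, hup, hdown⟩ := IsAtomless.exists_integrable_not_ae_le (μ := ℙ) hna
  have hinv (ω : Ω) : (Real.exp (g ω))⁻¹ = Real.exp (-g ω) := (Real.exp_neg _).symm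
  have hnoED (γ : ℝ) :
      ¬ ScalarAdmitsED ℙ θ θinv (scalarCocycle θ θinv fun ω => Real.exp (g ω)) γ :=
    not_scalarAdmitsED hpres hli herg (fun ω => (Real.exp_pos _).ne') (not_ae_exp_le hup)
      (by simpa only [hinv] using not_ae_exp_le hdown) γ
  refine ⟨fun ω => Real.exp (g ω), hgm.exp, fun ω => Real.exp_pos _, ?_, ?_,
    fun c => ⟨c + 1, by linarith, hnoED _⟩, fun c => ⟨c - 1, by linarith, hnoED _⟩⟩
  · simpa only [posLog_exp] using hgi.pos_part
  · simpa only [hinv, posLog_exp] using hgi.neg_part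

/-- Over any invertible ergodic measure-preserving transformation of a
non-atomic probability space there is a measurable `a : Ω → (0, ∞)` whose scalar cocycle
satisfies the integrability conditions of the Multiplicative Ergodic Theorem while its
dichotomy spectrum is unbounded from above and from below. -/
theorem exists_integrable_cocycle_with_unbounded_spectrum
    {Ω : Type*} [MeasurableSpace Ω] (ℙ : Measure Ω) [IsProbabilityMeasure ℙ]
    (θ θinv : Ω → Ω) (hθm : Measurable θ) (hθinvm : Measurable θinv)
    (hli : Function.LeftInverse θinv θ) (hri : Function.RightInverse θinv θ)
    (hpres : MeasurePreserving θ ℙ ℙ)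
    (herg : ∀ A : Set Ω, MeasurableSet A → θ ⁻¹' A = A → ℙ A = 0 ∨ ℙ A = 1)
    (hna : ∀ A : Set Ω, MeasurableSet A → 0 < ℙ A →
      ∃ B ⊆ A, MeasurableSet B ∧ 0 < ℙ B ∧ ℙ B < ℙ A) :
    ∃ a : Ω → ℝ, Measurable a ∧ (∀ ω, 0 < a ω) ∧
      Integrable (fun ω => posLog (a ω)) ℙ ∧
      Integrable (fun ω => posLog ((a ω)⁻¹)) ℙ ∧
      (∀ c : ℝ, ∃ γ > c, ¬ ScalarAdmitsED ℙ θ θinv (scalarCocycle θ θinv a) γ) ∧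
      (∀ c : ℝ, ∃ γ < c, ¬ ScalarAdmitsED ℙ θ θinv (scalarCocycle θ θinv a) γ) :=
  exists_integrable_cocycle_with_unbounded_spectrum_general ℙ θ θinv hli hpres herg hna

end
end

section
/- Let (θ, Φ) be a linear random dynamical system on ℝ^d with dichotomy spectrum Σ, and define the finite-time Lyapunov exponent λ(T, ω, x) := (1/T)·ln( ‖Φ(T, ω)x‖ / ‖x‖ ) for T > 0, ω ∈ Ω and x ∈ ℝ^d \ {0}. If sup Σ < +∞, then lim_{T→∞} esssup_{ω ∈ Ω} sup_{x ∈ ℝ^d \ {0}} λ(T, ω, x) = sup Σ. If inf Σ > −∞, then lim_{T→∞} essinf_{ω ∈ Ω} inf_{x ∈ ℝ^d \ {0}} λ(T, ω, x) = inf Σ. -/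
open MeasureTheory Filter

noncomputable section

/-- A linear random dynamical system `(θ, Φ)` on `ℝ^d` over the probability space `(Ω, 𝓕, ℙ)`:
`θ` is a measure-preserving measurable dynamical system on `Ω`, and `Φ` is a measurable
cocycle over `θ` taking values in the invertible continuous linear maps of `ℝ^d`. -/
structure LinRDS {Ω : Type*} [MeasurableSpace Ω] (ℙ : Measure Ω) (d : ℕ) where
  θ : ℝ → Ω → Ω
  Φ : ℝ → Ω → EuclideanSpace ℝ (Fin d) →L[ℝ] EuclideanSpace ℝ (Fin d)
  θ_meas : Measurable fun p : ℝ × Ω => θ p.1 p.2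
  θ_zero : ∀ ω, θ 0 ω = ω
  θ_add : ∀ t s ω, θ (t + s) ω = θ t (θ s ω)
  θ_pres : ∀ t, MeasurePreserving (θ t) ℙ ℙ
  Φ_meas : ∀ x, Measurable fun p : ℝ × Ω => Φ p.1 p.2 x
  Φ_zero : ∀ ω, Φ 0 ω = 1
  Φ_cocycle : ∀ t s ω, Φ (t + s) ω = Φ t (θ s ω) * Φ s ω
  Φ_isUnit : ∀ t ω, IsUnit (Φ t ω)

variable {Ω : Type*} [MeasurableSpace Ω] {ℙ : Measure Ω} {d : ℕ}

/-- The base of the linear random dynamical system is ergodic. -/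
def LinRDS.IsErgodic (S : LinRDS ℙ d) : Prop :=
  ∀ A : Set Ω, MeasurableSet A → (∀ t, S.θ t ⁻¹' A = A) → ℙ A = 0 ∨ ℙ A = 1

/-- An invariant projector of a linear random dynamical system. -/
def LinRDS.InvProjector (S : LinRDS ℙ d)
    (P : Ω → EuclideanSpace ℝ (Fin d) →L[ℝ] EuclideanSpace ℝ (Fin d)) : Prop :=
  (∀ x, Measurable fun ω => P ω x) ∧ (∀ ω, P ω * P ω = P ω) ∧
    ∀ t ω, P (S.θ t ω) * S.Φ t ω = S.Φ t ω * P ω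

/-- `(θ, Φ)` admits an exponential dichotomy with growth rate `γ` and invariant projector `P`. -/
def LinRDS.IsED (S : LinRDS ℙ d) (γ : ℝ)
    (P : Ω → EuclideanSpace ℝ (Fin d) →L[ℝ] EuclideanSpace ℝ (Fin d)) : Prop :=
  S.InvProjector P ∧ ∃ a > (0:ℝ), ∃ K ≥ (1:ℝ), ∀ᵐ ω ∂ℙ,
    (∀ t : ℝ, 0 ≤ t → ‖S.Φ t ω * P ω‖ ≤ K * Real.exp ((γ - a) * t)) ∧
    (∀ t : ℝ, t ≤ 0 → ‖S.Φ t ω * (1 - P ω)‖ ≤ K * Real.exp ((γ + a) * t))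

/-- `(θ, Φ)` admits an exponential dichotomy with real growth rate `γ`. -/
def LinRDS.AdmitsED (S : LinRDS ℙ d) (γ : ℝ) : Prop :=
  ∃ P, S.IsED γ P

/-- `(θ, Φ)` admits an exponential dichotomy with extended-real growth rate `γ`; for
`γ = ±∞` this means an exponential dichotomy with some real growth rate whose projector
is a.s. the identity (resp. a.s. zero). -/
def LinRDS.AdmitsEDE (S : LinRDS ℙ d) (γ : EReal) : Prop :=
  (∃ g : ℝ, γ = (g : EReal) ∧ S.AdmitsED g) ∨
  (γ = ⊤ ∧ ∃ g : ℝ, ∃ P, S.IsED g P ∧ ∀ᵐ ω ∂ℙ, P ω = 1) ∨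
  (γ = ⊥ ∧ ∃ g : ℝ, ∃ P, S.IsED g P ∧ ∀ᵐ ω ∂ℙ, P ω = 0)

/-- The dichotomy spectrum of `(θ, Φ)`, a subset of the extended real line. -/
def LinRDS.spectrum (S : LinRDS ℙ d) : Set EReal :=
  {γ | ¬ S.AdmitsEDE γ}

/-- The rank of a continuous linear map on `ℝ^d`. -/
def clmRank (P : EuclideanSpace ℝ (Fin d) →L[ℝ] EuclideanSpace ℝ (Fin d)) : ℕ :=
  Module.finrank ℝ (LinearMap.range
    (P : EuclideanSpace ℝ (Fin d) →ₗ[ℝ] EuclideanSpace ℝ (Fin d)))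

/-!
For `γ > sup Σ` the cocycle grows uniformly slower than `e^{γt}` (`GrowthRateLT γ`). The
resolvent point `+∞` gives such a bound at some large rate `G`, and it extends down to `γ`: the
infimum `c` of the rates in `[γ, G]` carrying the bound is a resolvent point, the dichotomy at `c`
also works at nearby rates, where the bound forces its projector to be `1`, so `c` carries the
bound, which then persists slightly below `c`. Conversely, if the essential supremum of the
finite-time exponents dropped below some `b < sup Σ` at a single time `T₀`, iterating the cocycle
along multiples of `T₀` would give a dichotomy with projector `1` at the rate `sup Σ`, which lies
in `Σ` because the resolvent is open. The statement about `inf Σ` is the one about `sup Σ` for the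
time-reversed system `(θ₋ₜ, Φ₋ₜ)`, whose spectrum is `-Σ`.
-/

open Set Topology

lemma EReal.neg_iSup {ι : Sort*} (f : ι → EReal) : -(⨆ i, f i) = ⨅ i, -f i :=
  le_antisymm (le_iInf fun i => EReal.neg_le_neg_iff.2 (le_iSup f i))
    (EReal.le_neg.1 (iSup_le fun i => EReal.le_neg.1 (iInf_le (fun i => -f i) i)))

namespace LinRDS

variable (S : LinRDS ℙ d)

lemma Φ_neg_apply_Φ (t : ℝ) (ω : Ω) (x : EuclideanSpace ℝ (Fin d)) :
    S.Φ (-t) (S.θ t ω) (S.Φ t ω x) = x := by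
  rw [← mul_apply_eq_comp, ← S.Φ_cocycle, neg_add_cancel, S.Φ_zero,
    one_apply_eq_self]

lemma Φ_apply_Φ_neg (t : ℝ) (ω : Ω) (x : EuclideanSpace ℝ (Fin d)) :
    S.Φ t ω (S.Φ (-t) (S.θ t ω) x) = x := by
  simpa only [neg_neg, ← S.θ_add, neg_add_cancel, S.θ_zero] using S.Φ_neg_apply_Φ (-t) (S.θ t ω) x

lemma Φ_apply_ne_zero (t : ℝ) (ω : Ω) {x : EuclideanSpace ℝ (Fin d)} (hx : x ≠ 0) :
    S.Φ t ω x ≠ 0 := fun h => hx (by rw [← S.Φ_neg_apply_Φ t ω x, h, map_zero])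

lemma ae_comp_θ (t : ℝ) {p : Ω → Prop} (h : ∀ᵐ ω ∂ℙ, p ω) : ∀ᵐ ω ∂ℙ, p (S.θ t ω) :=
  (S.θ_pres t).quasiMeasurePreserving.ae h

lemma InvProjector.apply_Φ {P : Ω → EuclideanSpace ℝ (Fin d) →L[ℝ] EuclideanSpace ℝ (Fin d)}
    (hP : S.InvProjector P) (t : ℝ) (ω : Ω) (x : EuclideanSpace ℝ (Fin d)) :
    P (S.θ t ω) (S.Φ t ω x) = S.Φ t ω (P ω x) := by
  rw [← mul_apply_eq_comp, hP.2.2, mul_apply_eq_comp]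

lemma measurableEmbedding_θ (t : ℝ) : MeasurableEmbedding (S.θ t) :=
  MeasurableEquiv.measurableEmbedding
    { toFun := S.θ t
      invFun := S.θ (-t)
      left_inv := fun ω => by rw [← S.θ_add, neg_add_cancel, S.θ_zero]
      right_inv := fun ω => by rw [← S.θ_add, add_neg_cancel, S.θ_zero]
      measurable_toFun := S.θ_meas.comp (measurable_const.prodMk measurable_id)
      measurable_invFun := S.θ_meas.comp (measurable_const.prodMk measurable_id) }

variable {S}

lemma IsED.eventually_nhds {γ : ℝ}
    {P : Ω → EuclideanSpace ℝ (Fin d) →L[ℝ] EuclideanSpace ℝ (Fin d)} (h : S.IsED γ P) :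
    ∀ᶠ γ' in 𝓝 γ, S.IsED γ' P := by
  obtain ⟨hP, a, ha, K, hK, hae⟩ := h
  refine Metric.eventually_nhds_iff.2 ⟨a / 2, by positivity, fun γ' hγ' => ?_⟩
  rw [Real.dist_eq, abs_lt] at hγ'
  refine ⟨hP, a / 2, by positivity, K, hK, ?_⟩
  filter_upwards [hae] with ω ⟨hforward, hbackward⟩
  refine ⟨fun t ht => (hforward t ht).trans ?_, fun t ht => (hbackward t ht).trans ?_⟩
  · gcongr K * Real.exp (?_ * t)
    linarith
  · gcongr K * Real.exp ?_
    exact mul_le_mul_of_nonpos_right (by linarith) ht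

/-- An exponential dichotomy with growth rate `γ` and projector `1`, without the projector. -/
def GrowthRateLT (S : LinRDS ℙ d) (γ : ℝ) : Prop :=
  ∃ b < γ, ∃ K, ∀ᵐ ω ∂ℙ, ∀ t, 0 ≤ t → ‖S.Φ t ω‖ ≤ K * Real.exp (b * t)

lemma GrowthRateLT.mono {γ γ' : ℝ} (h : S.GrowthRateLT γ) (hγ : γ ≤ γ') : S.GrowthRateLT γ' :=
  let ⟨b, hb, hK⟩ := h
  ⟨b, hb.trans_le hγ, hK⟩

lemma GrowthRateLT.exists_lt {γ : ℝ} (h : S.GrowthRateLT γ) : ∃ γ' < γ, S.GrowthRateLT γ' :=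
  let ⟨b, hb, hK⟩ := h
  ⟨(b + γ) / 2, by linarith, b, by linarith, hK⟩

lemma GrowthRateLT.admitsED {γ : ℝ} (h : S.GrowthRateLT γ) : S.AdmitsED γ := by
  obtain ⟨b, hb, K, hK⟩ := h
  refine ⟨fun _ => 1, ⟨fun _ => measurable_const, fun _ => mul_one 1,
    fun t ω => by rw [one_mul, mul_one]⟩, γ - b, sub_pos.2 hb, max K 1, le_max_right K 1, ?_⟩
  filter_upwards [hK] with ω hω
  refine ⟨fun t ht => ?_, fun t ht => by simp [Real.exp_nonneg]⟩
  rw [mul_one, sub_sub_cancel]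
  exact (hω t ht).trans (by gcongr; exact le_max_left K 1)

lemma IsED.growthRateLT_of_ae_eq_one {γ : ℝ}
    {P : Ω → EuclideanSpace ℝ (Fin d) →L[ℝ] EuclideanSpace ℝ (Fin d)} (h : S.IsED γ P)
    (hP : ∀ᵐ ω ∂ℙ, P ω = 1) : S.GrowthRateLT γ := by
  obtain ⟨-, a, ha, K, -, hae⟩ := h
  refine ⟨γ - a, by linarith, K, ?_⟩
  filter_upwards [hae, hP] with ω hω hPω t ht
  simpa [hPω] using hω.1 t ht

/-- A vector in the kernel of `P ω` is pulled back from time `n` with a factor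
`e^{-(γ+a)n}` by the dichotomy and pushed forward with a factor `e^{bn}`, `b < γ`, so it is `0`. -/
lemma IsED.ae_eq_one_of_growthRateLT {γ : ℝ}
    {P : Ω → EuclideanSpace ℝ (Fin d) →L[ℝ] EuclideanSpace ℝ (Fin d)} (h : S.IsED γ P)
    (hγ : S.GrowthRateLT γ) : ∀ᵐ ω ∂ℙ, P ω = 1 := by
  obtain ⟨hP, a, ha, K, hK, hae⟩ := h
  obtain ⟨b, hb, L, hL⟩ := hγ
  filter_upwards [hL, ae_all_iff.2 fun n : ℕ => S.ae_comp_θ n hae] with ω hLω hPn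
  ext1 x
  set y := x - P ω x
  have hPy : P ω y = 0 := by
    rw [map_sub, ← mul_apply_eq_comp, hP.2.1, sub_self]
  have hbound : ∀ n : ℕ, ‖y‖ ≤ K * L * Real.exp ((b - (γ + a)) * n) * ‖y‖ := by
    intro n
    have hy : y = (S.Φ (-n) (S.θ n ω) * (1 - P (S.θ n ω))) (S.Φ n ω y) := by
      rw [mul_apply_eq_comp, sub_apply, one_apply_eq_self,
        hP.apply_Φ, hPy, map_zero, sub_zero, S.Φ_neg_apply_Φ]
    calc ‖y‖ ≤ K * Real.exp ((γ + a) * -n) * (L * Real.exp (b * n) * ‖y‖) := by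
          conv_lhs => rw [hy]
          refine ((ContinuousLinearMap.le_opNorm _ _).trans (mul_le_mul
            ((hPn n).2 (-n) (by simp)) ((S.Φ n ω).le_of_opNorm_le (hLω n n.cast_nonneg) y)
            (norm_nonneg _) (by positivity)))
      _ = K * L * Real.exp ((b - (γ + a)) * n) * ‖y‖ := by
          rw [show (b - (γ + a)) * n = (γ + a) * -n + b * n by ring, Real.exp_add]
          ring
  have hlim : Tendsto (fun n : ℕ => K * L * Real.exp ((b - (γ + a)) * n) * ‖y‖) atTop
      (𝓝 (K * L * 0 * ‖y‖)) :=
    ((Real.tendsto_exp_atBot.comp (tendsto_natCast_atTop_atTop.const_mul_atTop_of_neg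
      (by linarith))).const_mul _).mul_const _
  have hy0 : y = 0 := norm_le_zero_iff.1 (by simpa using ge_of_tendsto' hlim hbound)
  rw [one_apply_eq_self]
  exact (sub_eq_zero.1 hy0).symm

lemma growthRateLT_of_forall_Icc {γ G : ℝ} (hγG : γ ≤ G) (hED : ∀ μ ∈ Icc γ G, S.AdmitsED μ)
    (hG : S.GrowthRateLT G) : S.GrowthRateLT γ := by
  set B := {μ | μ ∈ Icc γ G ∧ S.GrowthRateLT μ}
  have hGB : G ∈ B := ⟨⟨hγG, le_rfl⟩, hG⟩
  have hBbdd : BddBelow B := ⟨γ, fun μ hμ => hμ.1.1⟩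
  set c := sInf B
  have hc : c ∈ Icc γ G := ⟨le_csInf ⟨G, hGB⟩ fun μ hμ => hμ.1.1, csInf_le hBbdd hGB⟩
  obtain ⟨P, hP⟩ := hED c hc
  have hcB : S.GrowthRateLT c := by
    obtain ⟨ε, hε, hball⟩ := Metric.eventually_nhds_iff.1 hP.eventually_nhds
    obtain ⟨μ, hμB, hμ⟩ := exists_lt_of_csInf_lt ⟨G, hGB⟩ (lt_add_of_pos_right c hε)
    have hPμ : S.IsED μ P := hball <| by
      rw [Real.dist_eq, abs_lt]
      constructor <;> linarith [csInf_le hBbdd hμB]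
    exact hP.growthRateLT_of_ae_eq_one (hPμ.ae_eq_one_of_growthRateLT hμB.2)
  obtain ⟨γ', hγ'c, hγ'⟩ := hcB.exists_lt
  refine hcB.mono (not_lt.1 fun hγc => ?_)
  have hmax : max γ γ' ∈ B :=
    ⟨⟨le_max_left γ γ', max_le hγG (hγ'c.le.trans hc.2)⟩, hγ'.mono (le_max_right γ γ')⟩
  exact (csInf_le hBbdd hmax).not_gt (max_lt hγc hγ'c)

lemma admitsED_of_coe_notMem_spectrum {μ : ℝ} (h : (μ : EReal) ∉ S.spectrum) :
    S.AdmitsED μ := by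
  rcases not_not.1 h with ⟨g, hg, hED⟩ | ⟨htop, -⟩ | ⟨hbot, -⟩
  · rwa [EReal.coe_eq_coe_iff.1 hg]
  · exact absurd htop (EReal.coe_ne_top μ)
  · exact absurd hbot (EReal.coe_ne_bot μ)

lemma growthRateLT_of_sSup_spectrum_lt (hfin : sSup S.spectrum < ⊤) {γ : ℝ}
    (hγ : sSup S.spectrum < γ) : S.GrowthRateLT γ := by
  have htop : S.AdmitsEDE ⊤ := not_not.1 fun h => hfin.ne (top_unique (le_sSup h))
  obtain ⟨g, hg⟩ : ∃ g, S.GrowthRateLT g := by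
    rcases htop with ⟨g, hg, -⟩ | ⟨-, g, P, hP, hP1⟩ | ⟨hbot, -⟩
    · exact absurd hg.symm (EReal.coe_ne_top g)
    · exact ⟨g, hP.growthRateLT_of_ae_eq_one hP1⟩
    · exact absurd hbot top_ne_bot
  refine growthRateLT_of_forall_Icc (le_max_left γ g) (fun μ hμ => ?_) (hg.mono (le_max_right γ g))
  exact admitsED_of_coe_notMem_spectrum fun hmem =>
    (hγ.trans_le (EReal.coe_le_coe_iff.2 hμ.1)).not_ge (le_sSup hmem)

/-- The resolvent is open, so a real `sup Σ` lies in `Σ`. -/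
lemma not_admitsED_of_sSup_spectrum_eq {s : ℝ} (hs : sSup S.spectrum = s) : ¬ S.AdmitsED s := by
  rintro ⟨P, hP⟩
  obtain ⟨ε, hε, hball⟩ := Metric.eventually_nhds_iff.1 hP.eventually_nhds
  suffices h : sSup S.spectrum ≤ ((s - ε : ℝ) : EReal) by
    rw [hs, EReal.coe_le_coe_iff] at h
    linarith
  refine sSup_le fun μ hμ => ?_
  have hμs : μ ≤ s := hs ▸ le_sSup hμ
  induction μ using EReal.rec with
  | bot => exact bot_le
  | top => exact absurd hμs (not_le.2 (EReal.coe_lt_top s))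
  | coe r =>
    refine EReal.coe_le_coe_iff.2 (not_lt.1 fun hr => hμ (Or.inl ⟨r, rfl, P, hball ?_⟩))
    rw [Real.dist_eq, abs_lt]
    constructor <;> linarith [EReal.coe_le_coe_iff.1 hμs]

/-- The finite-time Lyapunov exponent `λ(T, ω, x)`. -/
def ftle (S : LinRDS ℙ d) (T : ℝ) (ω : Ω) (x : EuclideanSpace ℝ (Fin d)) : ℝ :=
  1 / T * Real.log (‖S.Φ T ω x‖ / ‖x‖)

def ftleSup (S : LinRDS ℙ d) (T : ℝ) (ω : Ω) : EReal :=
  ⨆ x : {x : EuclideanSpace ℝ (Fin d) // x ≠ 0}, (S.ftle T ω x : EReal)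

def ftleInf (S : LinRDS ℙ d) (T : ℝ) (ω : Ω) : EReal :=
  ⨅ x : {x : EuclideanSpace ℝ (Fin d) // x ≠ 0}, (S.ftle T ω x : EReal)

lemma ftle_le_iff {T b : ℝ} (hT : 0 < T) (ω : Ω) {x : EuclideanSpace ℝ (Fin d)} (hx : x ≠ 0) :
    S.ftle T ω x ≤ b ↔ ‖S.Φ T ω x‖ ≤ Real.exp (b * T) * ‖x‖ := by
  have hΦx : 0 < ‖S.Φ T ω x‖ := norm_pos_iff.2 (S.Φ_apply_ne_zero T ω hx)
  rw [ftle, one_div, inv_mul_le_iff₀ hT, mul_comm T b, Real.log_le_iff_le_exp (by positivity),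
    div_le_iff₀ (norm_pos_iff.2 hx)]

lemma ftleSup_le_iff {T b : ℝ} (hT : 0 < T) (ω : Ω) :
    S.ftleSup T ω ≤ b ↔ ‖S.Φ T ω‖ ≤ Real.exp (b * T) := by
  rw [ftleSup, iSup_le_iff, ContinuousLinearMap.opNorm_le_iff (Real.exp_pos _).le,
    Subtype.forall]
  refine forall_congr' fun x => ?_
  rcases eq_or_ne x 0 with rfl | hx
  · simp
  · simp only [EReal.coe_le_coe_iff, ftle_le_iff hT ω hx, ne_eq, hx, not_false_eq_true,
      forall_const]

lemma GrowthRateLT.eventually_essSup_ftleSup_le {c : ℝ} (h : S.GrowthRateLT c) :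
    ∀ᶠ T in atTop, essSup (S.ftleSup T) ℙ ≤ c := by
  obtain ⟨b, hb, K, hK⟩ := h
  have hexp : Tendsto (fun T => Real.exp ((c - b) * T)) atTop atTop :=
    Real.tendsto_exp_atTop.comp (tendsto_id.const_mul_atTop (sub_pos.2 hb))
  filter_upwards [hexp.eventually_ge_atTop K, eventually_gt_atTop 0] with T hKT hT
  refine essSup_le_of_ae_le _ ?_
  filter_upwards [hK] with ω hω
  refine (ftleSup_le_iff hT ω).2 ((hω T hT.le).trans ?_)
  calc K * Real.exp (b * T) ≤ Real.exp ((c - b) * T) * Real.exp (b * T) := by gcongr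
    _ = Real.exp (c * T) := by rw [← Real.exp_add]; ring_nf

lemma limsup_essSup_ftleSup_le (hfin : sSup S.spectrum < ⊤) :
    limsup (fun T => essSup (S.ftleSup T) ℙ) atTop ≤ sSup S.spectrum := by
  refine le_of_forall_gt_imp_ge_of_dense fun c hc => ?_
  obtain ⟨r, hr, hrc⟩ := EReal.exists_between_coe_real hc
  exact (limsup_le_of_le (by isBoundedDefault)
    (growthRateLT_of_sSup_spectrum_lt hfin hr).eventually_essSup_ftleSup_le).trans hrc.le

lemma ae_norm_Φ_nat_mul_le {T₀ M : ℝ} (h : ∀ᵐ ω ∂ℙ, ‖S.Φ T₀ ω‖ ≤ M) :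
    ∀ᵐ ω ∂ℙ, ∀ n : ℕ, ‖S.Φ (n * T₀) ω‖ ≤ M ^ n := by
  filter_upwards [ae_all_iff.2 fun n : ℕ => S.ae_comp_θ (n * T₀) h] with ω hω n
  induction n with
  | zero =>
    rw [Nat.cast_zero, zero_mul, S.Φ_zero, pow_zero]
    exact ContinuousLinearMap.norm_id_le
  | succ n ih =>
    rw [Nat.cast_succ, add_one_mul, add_comm, S.Φ_cocycle, pow_succ']
    exact (norm_mul_le _ _).trans
      (mul_le_mul (hω n) ih (norm_nonneg _) ((norm_nonneg _).trans (hω n)))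

lemma GrowthRateLT.exists_bound_Icc {γ : ℝ} (h : S.GrowthRateLT γ) (T₀ : ℝ) :
    ∃ C ≥ 0, ∀ᵐ ω ∂ℙ, ∀ t ∈ Icc 0 T₀, ‖S.Φ t ω‖ ≤ C := by
  obtain ⟨b, -, K, hK⟩ := h
  refine ⟨|K| * Real.exp (|b| * T₀), by positivity, ?_⟩
  filter_upwards [hK] with ω hω t ht
  refine (hω t ht.1).trans (mul_le_mul (le_abs_self K) (Real.exp_le_exp.2 ?_)
    (Real.exp_nonneg _) (abs_nonneg K))
  nlinarith [mul_nonneg (abs_nonneg b) (sub_nonneg.2 ht.2),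
    mul_nonneg (sub_nonneg.2 (le_abs_self b)) ht.1]

/-- Split `[0, t]` into `⌊t / T₀⌋` steps of length `T₀` and a remainder of length at most `T₀`. -/
lemma GrowthRateLT.of_ae_norm_le {γ γ' b T₀ : ℝ} (hγ' : S.GrowthRateLT γ') (hT₀ : 0 < T₀)
    (hb : b < γ) (h : ∀ᵐ ω ∂ℙ, ‖S.Φ T₀ ω‖ ≤ Real.exp (b * T₀)) : S.GrowthRateLT γ := by
  obtain ⟨C, hC, hwin⟩ := hγ'.exists_bound_Icc T₀
  refine ⟨b, hb, C * Real.exp (|b| * T₀), ?_⟩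
  filter_upwards [S.ae_norm_Φ_nat_mul_le h,
    ae_all_iff.2 fun n : ℕ => S.ae_comp_θ (n * T₀) hwin] with ω hpow hstep t ht
  set n := ⌊t / T₀⌋₊
  have hn : n * T₀ ≤ t := (le_div_iff₀ hT₀).1 (Nat.floor_le (div_nonneg ht hT₀.le))
  have hn' : t - n * T₀ ≤ T₀ := by
    nlinarith [(div_lt_iff₀ hT₀).1 (Nat.lt_floor_add_one (t / T₀))]
  have hexp : Real.exp (b * T₀) ^ n ≤ Real.exp (|b| * T₀) * Real.exp (b * t) := by
    rw [← Real.exp_nat_mul, ← Real.exp_add, Real.exp_le_exp]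
    nlinarith [mul_nonneg (abs_nonneg b) (sub_nonneg.2 hn'),
      mul_nonneg (by linarith [neg_abs_le b] : 0 ≤ b + |b|) (sub_nonneg.2 hn)]
  calc ‖S.Φ t ω‖ = ‖S.Φ (t - n * T₀) (S.θ (n * T₀) ω) * S.Φ (n * T₀) ω‖ := by
        rw [← S.Φ_cocycle, sub_add_cancel]
    _ ≤ C * Real.exp (b * T₀) ^ n := (norm_mul_le _ _).trans
        (mul_le_mul (hstep n _ ⟨sub_nonneg.2 hn, hn'⟩) (hpow n) (norm_nonneg _) hC)
    _ ≤ C * (Real.exp (|b| * T₀) * Real.exp (b * t)) := by gcongr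
    _ = C * Real.exp (|b| * T₀) * Real.exp (b * t) := by ring

lemma sSup_spectrum_le_liminf_essSup_ftleSup (hfin : sSup S.spectrum < ⊤) :
    sSup S.spectrum ≤ liminf (fun T => essSup (S.ftleSup T) ℙ) atTop := by
  by_contra! hlt
  obtain ⟨b, hb, hbs⟩ := EReal.exists_between_coe_real hlt
  obtain ⟨s, hs⟩ : ∃ s : ℝ, sSup S.spectrum = s :=
    ⟨_, (EReal.coe_toReal hfin.ne (ne_bot_of_gt hbs)).symm⟩
  obtain ⟨T₀, hess, hT₀⟩ := ((frequently_lt_of_liminf_lt (by isBoundedDefault) hb).and_eventually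
    (eventually_gt_atTop 0)).exists
  have hΦ : ∀ᵐ ω ∂ℙ, ‖S.Φ T₀ ω‖ ≤ Real.exp (b * T₀) :=
    (ae_lt_of_essSup_lt hess).mono fun ω hω => (ftleSup_le_iff hT₀ ω).1 hω.le
  have hbound : S.GrowthRateLT (s + 1) :=
    growthRateLT_of_sSup_spectrum_lt hfin (hs ▸ EReal.coe_lt_coe_iff.2 (lt_add_one s))
  rw [hs, EReal.coe_lt_coe_iff] at hbs
  exact not_admitsED_of_sSup_spectrum_eq hs (hbound.of_ae_norm_le hT₀ hbs hΦ).admitsED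

theorem tendsto_essSup_ftleSup (hfin : sSup S.spectrum < ⊤) :
    Tendsto (fun T => essSup (S.ftleSup T) ℙ) atTop (𝓝 (sSup S.spectrum)) :=
  tendsto_of_le_liminf_of_limsup_le (sSup_spectrum_le_liminf_essSup_ftleSup hfin)
    (limsup_essSup_ftleSup_le hfin)

def reverse (S : LinRDS ℙ d) : LinRDS ℙ d where
  θ t := S.θ (-t)
  Φ t := S.Φ (-t)
  θ_meas := S.θ_meas.comp (measurable_fst.neg.prodMk measurable_snd)
  θ_zero := by simpa using S.θ_zero
  θ_add t s ω := by rw [neg_add, S.θ_add]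
  θ_pres t := S.θ_pres (-t)
  Φ_meas x := (S.Φ_meas x).comp (measurable_fst.neg.prodMk measurable_snd)
  Φ_zero := by simpa using S.Φ_zero
  Φ_cocycle t s ω := by rw [neg_add, S.Φ_cocycle]
  Φ_isUnit t := S.Φ_isUnit (-t)

lemma reverse_reverse (S : LinRDS ℙ d) : S.reverse.reverse = S := by
  cases S
  simp only [reverse, neg_neg]

lemma IsED.reverse {γ : ℝ} {P : Ω → EuclideanSpace ℝ (Fin d) →L[ℝ] EuclideanSpace ℝ (Fin d)}
    (h : S.IsED γ P) : S.reverse.IsED (-γ) (1 - P) := by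
  obtain ⟨⟨hmeas, hidem, hinv⟩, a, ha, K, hK, hae⟩ := h
  refine ⟨⟨fun x => measurable_const.sub (hmeas x), fun ω => ?_, fun t ω => ?_⟩, a, ha, K, hK, ?_⟩
  · simp only [Pi.sub_apply, Pi.one_apply, sub_mul, mul_sub, one_mul, mul_one, hidem, sub_self,
      sub_zero]
  · simp only [Pi.sub_apply, Pi.one_apply, sub_mul, mul_sub, one_mul, mul_one]
    exact congrArg (S.Φ (-t) ω - ·) (hinv (-t) ω)
  filter_upwards [hae] with ω ⟨hforward, hbackward⟩
  refine ⟨fun t ht => ?_, fun t ht => ?_⟩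
  · have h := hbackward (-t) (neg_nonpos.2 ht)
    rw [show (γ + a) * -t = (-γ - a) * t by ring] at h
    exact h
  · have h := hforward (-t) (neg_nonneg.2 ht)
    rw [show (γ - a) * -t = (-γ + a) * t by ring, ← sub_sub_cancel 1 (P ω)] at h
    exact h

lemma AdmitsEDE.reverse {γ : EReal} (h : S.AdmitsEDE γ) : S.reverse.AdmitsEDE (-γ) := by
  rcases h with ⟨g, rfl, P, hP⟩ | ⟨rfl, g, P, hP, hP1⟩ | ⟨rfl, g, P, hP, hP0⟩
  · exact Or.inl ⟨-g, (EReal.coe_neg g).symm, 1 - P, hP.reverse⟩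
  · refine Or.inr (Or.inr ⟨EReal.neg_top, -g, 1 - P, hP.reverse, ?_⟩)
    filter_upwards [hP1] with ω h
    simp [h]
  · refine Or.inr (Or.inl ⟨EReal.neg_bot, -g, 1 - P, hP.reverse, ?_⟩)
    filter_upwards [hP0] with ω h
    simp [h]

variable (S)

lemma mem_spectrum_reverse {γ : EReal} : γ ∈ S.reverse.spectrum ↔ -γ ∈ S.spectrum := by
  refine not_congr ⟨fun h => S.reverse_reverse ▸ h.reverse, fun h => ?_⟩
  simpa only [neg_neg] using h.reverse

lemma sInf_spectrum_eq_neg_sSup_reverse : sInf S.spectrum = -sSup S.reverse.spectrum :=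
  le_antisymm
    (EReal.le_neg.1 (sSup_le fun γ hγ => EReal.le_neg.1 (sInf_le (S.mem_spectrum_reverse.1 hγ))))
    (le_sInf fun μ hμ => EReal.neg_le.1 (le_sSup (S.mem_spectrum_reverse.2 (by rwa [neg_neg]))))

/-- Substitute `y = Φ(T, ω) x`; the inverse map `Φ(-T, θ_T ω)` is the reversed cocycle at
`θ_T ω`. -/
lemma ftleInf_eq_neg_reverse_ftleSup (T : ℝ) (ω : Ω) :
    S.ftleInf T ω = -S.reverse.ftleSup T (S.θ T ω) := by
  let e : {x : EuclideanSpace ℝ (Fin d) // x ≠ 0} ≃ {y : EuclideanSpace ℝ (Fin d) // y ≠ 0} :=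
    { toFun := fun x => ⟨S.Φ T ω x, S.Φ_apply_ne_zero T ω x.2⟩
      invFun := fun y => ⟨S.Φ (-T) (S.θ T ω) y, S.Φ_apply_ne_zero (-T) (S.θ T ω) y.2⟩
      left_inv := fun x => Subtype.ext (S.Φ_neg_apply_Φ T ω x)
      right_inv := fun y => Subtype.ext (S.Φ_apply_Φ_neg T ω y) }
  rw [ftleSup, EReal.neg_iSup, ← e.iInf_comp, ftleInf]
  refine iInf_congr fun x => ?_
  rw [← EReal.coe_neg, EReal.coe_eq_coe_iff]
  simp only [ftle, reverse, e, Equiv.coe_fn_mk, S.Φ_neg_apply_Φ]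
  rw [← inv_div ‖S.Φ T ω x‖, Real.log_inv, mul_neg, neg_neg]

lemma essInf_ftleInf (T : ℝ) : essInf (S.ftleInf T) ℙ = -essSup (S.reverse.ftleSup T) ℙ := by
  have hθ : essSup (S.reverse.ftleSup T ∘ S.θ T) ℙ = essSup (S.reverse.ftleSup T) ℙ := by
    rw [← (S.measurableEmbedding_θ T).essSup_map_measure, (S.θ_pres T).map_eq]
  rw [← hθ, funext (S.ftleInf_eq_neg_reverse_ftleSup T)]
  exact EReal.liminf_neg

end LinRDS

theorem finite_time_lyapunov_tendsto_spectrum_bounds_general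
    {Ω : Type*} [MeasurableSpace Ω] {ℙ : Measure Ω} {d : ℕ}
    (S : LinRDS ℙ d) :
    (sSup S.spectrum < ⊤ →
      Tendsto (fun T : ℝ =>
          essSup (fun ω =>
            ⨆ x : {x : EuclideanSpace ℝ (Fin d) // x ≠ 0},
              (((1 / T) * Real.log (‖S.Φ T ω x.1‖ / ‖x.1‖) : ℝ) : EReal)) ℙ)
        atTop (nhds (sSup S.spectrum))) ∧
    (⊥ < sInf S.spectrum →
      Tendsto (fun T : ℝ =>
          essInf (fun ω =>
            ⨅ x : {x : EuclideanSpace ℝ (Fin d) // x ≠ 0},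
              (((1 / T) * Real.log (‖S.Φ T ω x.1‖ / ‖x.1‖) : ℝ) : EReal)) ℙ)
        atTop (nhds (sInf S.spectrum))) := by
  refine ⟨LinRDS.tendsto_essSup_ftleSup, fun hfin => ?_⟩
  rw [S.sInf_spectrum_eq_neg_sSup_reverse] at hfin ⊢
  have hrev : sSup S.reverse.spectrum < ⊤ := by
    rwa [EReal.lt_neg_comm, EReal.neg_bot] at hfin
  convert (LinRDS.tendsto_essSup_ftleSup hrev).neg using 1
  funext T
  exact S.essInf_ftleInf T

/-- The finite-time Lyapunov exponents converge to the extremes of the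
dichotomy spectrum: if `sup Σ < +∞` then
`lim_{T→∞} esssup_ω sup_{x ≠ 0} (1/T) ln (‖Φ(T,ω)x‖/‖x‖) = sup Σ`, and if `inf Σ > −∞`
then `lim_{T→∞} essinf_ω inf_{x ≠ 0} (1/T) ln (‖Φ(T,ω)x‖/‖x‖) = inf Σ`. -/
theorem finite_time_lyapunov_tendsto_spectrum_bounds
    {Ω : Type*} [MeasurableSpace Ω] {ℙ : Measure Ω} [IsProbabilityMeasure ℙ] {d : ℕ}
    (hd : 0 < d) (S : LinRDS ℙ d) :
    (sSup S.spectrum < ⊤ →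
      Tendsto (fun T : ℝ =>
          essSup (fun ω =>
            ⨆ x : {x : EuclideanSpace ℝ (Fin d) // x ≠ 0},
              (((1 / T) * Real.log (‖S.Φ T ω x.1‖ / ‖x.1‖) : ℝ) : EReal)) ℙ)
        atTop (nhds (sSup S.spectrum))) ∧
    (⊥ < sInf S.spectrum →
      Tendsto (fun T : ℝ =>
          essInf (fun ω =>
            ⨅ x : {x : EuclideanSpace ℝ (Fin d) // x ≠ 0},
              (((1 / T) * Real.log (‖S.Φ T ω x.1‖ / ‖x.1‖) : ℝ) : EReal)) ℙ)
        atTop (nhds (sInf S.spectrum))) :=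
  finite_time_lyapunov_tendsto_spectrum_bounds_general S
end
end

section
/- Let (Ω, 𝓕, ℙ) be a probability space, θ a metric dynamical system on Ω, and (X₁, d₁), (X₂, d₂) metric spaces. Let (θ, φ₁) and (θ, φ₂) be random dynamical systems on X₁ and X₂ respectively which are uniformly topologically equivalent with respect to a random fixed point a of φ₁, with conjugacy h : Ω × X₁ → X₂. Then a is locally uniformly attractive for φ₁ if and only if the random fixed point ω ↦ h(ω, a(ω)) of φ₂ is locally uniformly attractive for φ₂. -/
open MeasureTheory Filter

noncomputable section

/-- A random fixed point `a` of the random dynamical system `(θ, φ)` on the metric space `X`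
is locally uniformly attractive: there is `δ > 0` with
`lim_{t→∞} esssup_{ω} sup_{x ∈ B_δ(a(ω))} d(φ(t, ω, x), a(θ_t ω)) = 0`. -/
def LocUnifAttractive {Ω X : Type*} [MeasurableSpace Ω] [MetricSpace X]
    (ℙ : Measure Ω) (θ : ℝ → Ω → Ω) (φ : ℝ → Ω → X → X) (a : Ω → X) : Prop :=
  ∃ δ > (0:ℝ), ∀ ε > (0:ℝ), ∃ T : ℝ, ∀ t ≥ T,
    ∀ᵐ ω ∂ℙ, ∀ x : X, dist x (a ω) < δ → dist (φ t ω x) (a (θ t ω)) ≤ ε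

/-- If the random dynamical systems `(θ, φ₁)` and `(θ, φ₂)` are uniformly
topologically equivalent with respect to a random fixed point `a` of `φ₁`, via the conjugacy
`h` (with inverse `hinv`), then `a` is locally uniformly attractive for `φ₁` if and only if
`ω ↦ h(ω, a(ω))` is locally uniformly attractive for `φ₂`. -/
theorem locUnifAttractive_iff_of_unif_topological_equiv
    {Ω X₁ X₂ : Type*} [MeasurableSpace Ω]
    [MetricSpace X₁] [MeasurableSpace X₁] [BorelSpace X₁]
    [MetricSpace X₂] [MeasurableSpace X₂] [BorelSpace X₂]
    (ℙ : Measure Ω) [IsProbabilityMeasure ℙ]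
    (θ : ℝ → Ω → Ω)
    (hθ_meas : Measurable fun p : ℝ × Ω => θ p.1 p.2)
    (hθ_zero : ∀ ω, θ 0 ω = ω)
    (hθ_add : ∀ t s ω, θ (t + s) ω = θ t (θ s ω))
    (hθ_pres : ∀ t, MeasurePreserving (θ t) ℙ ℙ)
    (φ₁ : ℝ → Ω → X₁ → X₁) (φ₂ : ℝ → Ω → X₂ → X₂)
    (hφ₁_meas : Measurable fun p : ℝ × Ω × X₁ => φ₁ p.1 p.2.1 p.2.2)
    (hφ₂_meas : Measurable fun p : ℝ × Ω × X₂ => φ₂ p.1 p.2.1 p.2.2)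
    (hφ₁_zero : ∀ ω x, φ₁ 0 ω x = x)
    (hφ₂_zero : ∀ ω x, φ₂ 0 ω x = x)
    (hφ₁_cocycle : ∀ t s ω x, φ₁ (t + s) ω x = φ₁ t (θ s ω) (φ₁ s ω x))
    (hφ₂_cocycle : ∀ t s ω x, φ₂ (t + s) ω x = φ₂ t (θ s ω) (φ₂ s ω x))
    (a : Ω → X₁) (ha_meas : Measurable a)
    (ha_fix : ∀ᵐ ω ∂ℙ, ∀ t : ℝ, φ₁ t ω (a ω) = a (θ t ω))
    (h : Ω → X₁ → X₂) (hinv : Ω → X₂ → X₁)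
    -- (i) almost surely, `h ω` is a homeomorphism with inverse `hinv ω`
    (h_homeo : ∀ᵐ ω ∂ℙ, Continuous (h ω) ∧ Continuous (hinv ω) ∧
      Function.LeftInverse (hinv ω) (h ω) ∧ Function.RightInverse (hinv ω) (h ω))
    -- (ii) measurability of the conjugacy and its inverse
    (h_meas : ∀ x₁ : X₁, Measurable fun ω => h ω x₁)
    (hinv_meas : ∀ x₂ : X₂, Measurable fun ω => hinv ω x₂)
    -- (iii) `φ₁` and `φ₂` are cohomologous via `h`
    (h_conj : ∀ᵐ ω ∂ℙ, ∀ (t : ℝ) (x : X₁), φ₂ t ω (h ω x) = h (θ t ω) (φ₁ t ω x))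
    -- (iv) uniformity of the conjugacy near the random fixed point
    (h_unif : ∀ ε > (0:ℝ), ∃ δ > (0:ℝ), ∀ᵐ ω ∂ℙ,
      ∀ x : X₁, dist x (a ω) < δ → dist (h ω x) (h ω (a ω)) ≤ ε)
    (hinv_unif : ∀ ε > (0:ℝ), ∃ δ > (0:ℝ), ∀ᵐ ω ∂ℙ,
      ∀ y : X₂, dist y (h ω (a ω)) < δ → dist (hinv ω y) (a ω) ≤ ε) :
    LocUnifAttractive ℙ θ φ₁ a ↔
      LocUnifAttractive ℙ θ φ₂ (fun ω => h ω (a ω)) := by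
  -- transport a.e. statements along θ t
  have key : ∀ (t : ℝ) (P : Ω → Prop), (∀ᵐ ω ∂ℙ, P ω) → (∀ᵐ ω ∂ℙ, P (θ t ω)) := by
    intro t P hP
    refine ae_of_ae_map (hθ_pres t).measurable.aemeasurable ?_
    rwa [(hθ_pres t).map_eq]
  constructor
  · rintro ⟨δ₁, hδ₁, H⟩
    obtain ⟨δ₂, hδ₂, hinv₂⟩ := hinv_unif (δ₁ / 2) (by linarith)
    refine ⟨δ₂, hδ₂, fun ε hε => ?_⟩
    obtain ⟨δ', hδ', hu⟩ := h_unif ε hε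
    obtain ⟨T, hT⟩ := H (δ' / 2) (by linarith)
    refine ⟨T, fun t ht => ?_⟩
    filter_upwards [h_conj, h_homeo, hinv₂, hT t ht, ha_fix,
      key t _ hu] with ω hc hh hi hH hf hu' y hy
    set x := hinv ω y with hx
    have hxy : h ω x = y := hh.2.2.2 y
    have hxa : dist x (a ω) < δ₁ := lt_of_le_of_lt (hi y hy) (by linarith)
    have h1 : dist (φ₁ t ω x) (a (θ t ω)) < δ' :=
      lt_of_le_of_lt (hH x hxa) (by linarith)
    have h2 := hu' (φ₁ t ω x) h1
    have h3 : φ₂ t ω y = h (θ t ω) (φ₁ t ω x) := by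
      rw [← hxy]; exact hc t x
    rw [h3]; exact h2
  · rintro ⟨δ₂, hδ₂, H⟩
    obtain ⟨δ₁, hδ₁, hu₁⟩ := h_unif (δ₂ / 2) (by linarith)
    refine ⟨δ₁, hδ₁, fun ε hε => ?_⟩
    obtain ⟨δ', hδ', hi⟩ := hinv_unif ε hε
    obtain ⟨T, hT⟩ := H (δ' / 2) (by linarith)
    refine ⟨T, fun t ht => ?_⟩
    filter_upwards [h_conj, hu₁, hT t ht, ha_fix,
      key t _ hi, key t _ h_homeo] with ω hc hu hH hf hi' hh' x hx
    have h1 : dist (h ω x) (h ω (a ω)) < δ₂ :=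
      lt_of_le_of_lt (hu x hx) (by linarith)
    have h2 : dist (φ₂ t ω (h ω x)) (h (θ t ω) (a (θ t ω))) < δ' :=
      lt_of_le_of_lt (hH (h ω x) h1) (by linarith)
    rw [hc t x] at h2
    have h3 := hi' _ h2
    rwa [hh'.2.2.1 (φ₁ t ω x)] at h3

end
end

section
/- Let α ∈ ℝ and let w : [0, ∞) → ℝ be continuous with w(0) = 0. Suppose u, v : [0, ∞) → ℝ are continuous and satisfy the integral equations u(t) = u(0) + ∫₀ᵗ (α·u(s) − u(s)³) ds + w(t) and v(t) = v(0) + ∫₀ᵗ (α·v(s) − v(s)³) ds + w(t) for all t ≥ 0. Then |u(t) − v(t)| ≤ e^{α t}·|u(0) − v(0)| for all t ≥ 0. (In particular, for α < 0 any two solutions of the pathwise stochastic differential equation dx = (αx − x³)dt + σ dW_t driven by the same noise path converge together uniformly exponentially at rate α.) -/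
/-!
The noise is additive, so it cancels in the difference `d = u - v`, which is therefore
differentiable with `d' = f(u) - f(v)` for the drift `f(x) = αx - x³`. Since `x ↦ x³` is
monotone, `f` is one-sided Lipschitz with constant `α`: `(x - y)(f x - f y) ≤ α (x - y)²`.
Hence `e^{-2αt} d(t)²` is nonincreasing, which is the claimed bound.
-/

open MeasureTheory intervalIntegral Set Real Topology

theorem hasDerivAt_of_eq_add_integral {E : Type*} [NormedAddCommGroup E] [NormedSpace ℝ E]
    [CompleteSpace E] {d g : ℝ → E} {a t : ℝ} (hg : ContinuousOn g (Ici a))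
    (hd : ∀ s ≥ a, d s = d a + ∫ r in a..s, g r) (ht : a < t) : HasDerivAt d (g t) t := by
  have hnhds : Ici a ∈ 𝓝 t := Ici_mem_nhds ht
  have hint : HasDerivAt (fun s => ∫ r in a..s, g r) (g t) t :=
    integral_hasDerivAt_right
      ((hg.mono (by simp [uIcc_of_le ht.le, Icc_subset_Ici_self])).intervalIntegrable)
      (hg.stronglyMeasurableAtFilter_nhdsWithin measurableSet_Ici t |>.filter_mono
        (nhdsWithin_eq_nhds.2 hnhds).ge) (hg.continuousAt hnhds)
  exact (hint.const_add (d a)).congr_of_eventuallyEq (Filter.mem_of_superset hnhds hd)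

theorem norm_le_exp_mul_norm_of_inner_deriv_le {E : Type*} [NormedAddCommGroup E]
    [InnerProductSpace ℝ E] {d d' : ℝ → E} {α : ℝ} (hd : ContinuousOn d (Ici 0))
    (hderiv : ∀ t > 0, HasDerivAt d (d' t) t)
    (hbound : ∀ t > 0, inner ℝ (d t) (d' t) ≤ α * ‖d t‖ ^ 2) {t : ℝ} (ht : 0 ≤ t) :
    ‖d t‖ ≤ exp (α * t) * ‖d 0‖ := by
  have hanti : AntitoneOn (fun s => exp (-(2 * α) * s) * ‖d s‖ ^ 2) (Ici 0) := by
    refine antitoneOn_of_hasDerivWithinAt_nonpos (convex_Ici 0) (by fun_prop)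
      (f' := fun s => exp (-(2 * α) * s) * (2 * inner ℝ (d s) (d' s) - 2 * α * ‖d s‖ ^ 2))
      (fun s hs => ?_) (fun s hs => ?_) <;> rw [interior_Ici] at hs
    · have := (((hasDerivAt_id s).const_mul (-(2 * α))).exp).mul (hderiv s hs).norm_sq
      exact (this.congr_deriv (by simp only [id_eq, mul_one]; ring)).hasDerivWithinAt
    · nlinarith [hbound s hs, exp_pos (-(2 * α) * s)]
  have hdecay : exp (-(2 * α) * t) * ‖d t‖ ^ 2 ≤ ‖d 0‖ ^ 2 := by
    simpa only [mul_zero, exp_zero, one_mul] using hanti self_mem_Ici ht ht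
  have hsq : ‖d t‖ ^ 2 ≤ (exp (α * t) * ‖d 0‖) ^ 2 :=
    calc ‖d t‖ ^ 2 = exp (2 * α * t) * (exp (-(2 * α) * t) * ‖d t‖ ^ 2) := by
          rw [← mul_assoc, ← exp_add, show 2 * α * t + -(2 * α) * t = 0 by ring, exp_zero,
            one_mul]
      _ ≤ exp (2 * α * t) * ‖d 0‖ ^ 2 := by gcongr
      _ = (exp (α * t) * ‖d 0‖) ^ 2 := by rw [mul_pow, ← exp_nat_mul]; ring_nf
  exact (sq_le_sq₀ (norm_nonneg _) (by positivity)).1 hsq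

theorem sub_mul_cubic_sub_le (α x y : ℝ) :
    (x - y) * ((α * x - x ^ 3) - (α * y - y ^ 3)) ≤ α * (x - y) ^ 2 := by
  nlinarith [mul_nonneg (sq_nonneg (x - y))
    (add_nonneg (sq_nonneg (x + y)) (add_nonneg (sq_nonneg x) (sq_nonneg y)))]

theorem pathwise_contraction_of_additive_noise_cubic_general
    (α : ℝ) (w u v : ℝ → ℝ)
    (hu_cont : ContinuousOn u (Set.Ici 0))
    (hv_cont : ContinuousOn v (Set.Ici 0))
    (hu_eq : ∀ t ≥ (0:ℝ), u t = u 0 + (∫ s in (0:ℝ)..t, (α * u s - u s ^ 3)) + w t)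
    (hv_eq : ∀ t ≥ (0:ℝ), v t = v 0 + (∫ s in (0:ℝ)..t, (α * v s - v s ^ 3)) + w t) :
    ∀ t ≥ (0:ℝ), |u t - v t| ≤ Real.exp (α * t) * |u 0 - v 0| := by
  have hint {x : ℝ → ℝ} (hx : ContinuousOn x (Ici 0)) {t : ℝ} (ht : 0 ≤ t) :
      IntervalIntegrable (fun s => α * x s - x s ^ 3) volume 0 t := by
    refine ContinuousOn.intervalIntegrable ?_
    rw [uIcc_of_le ht]
    exact (by fun_prop : ContinuousOn _ _).mono Icc_subset_Ici_self
  have hdiff : ∀ t ≥ (0:ℝ), u t - v t =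
      u 0 - v 0 + ∫ s in (0:ℝ)..t, ((α * u s - u s ^ 3) - (α * v s - v s ^ 3)) := by
    intro t ht
    rw [integral_sub (hint hu_cont ht) (hint hv_cont ht), hu_eq t ht, hv_eq t ht]
    ring
  intro t ht
  simpa only [Pi.sub_apply, Real.norm_eq_abs] using norm_le_exp_mul_norm_of_inner_deriv_le
    (hu_cont.sub hv_cont) (fun s hs => hasDerivAt_of_eq_add_integral (by fun_prop) hdiff hs)
    (fun s _ => by
      simpa only [Pi.sub_apply, Real.inner_apply, Real.norm_eq_abs, sq_abs]
        using sub_mul_cubic_sub_le α (u s) (v s)) ht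

/-- Two solutions of the pathwise integral equation
`x(t) = x(0) + ∫₀ᵗ (α x(s) − x(s)³) ds + w(t)` driven by the same continuous noise path `w`
satisfy `|u(t) − v(t)| ≤ e^{αt} |u(0) − v(0)|` for all `t ≥ 0`. -/
theorem pathwise_contraction_of_additive_noise_cubic
    (α : ℝ) (w u v : ℝ → ℝ)
    (hw_cont : ContinuousOn w (Set.Ici 0)) (hw_zero : w 0 = 0)
    (hu_cont : ContinuousOn u (Set.Ici 0))
    (hv_cont : ContinuousOn v (Set.Ici 0))
    (hu_eq : ∀ t ≥ (0:ℝ), u t = u 0 + (∫ s in (0:ℝ)..t, (α * u s - u s ^ 3)) + w t)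
    (hv_eq : ∀ t ≥ (0:ℝ), v t = v 0 + (∫ s in (0:ℝ)..t, (α * v s - v s ^ 3)) + w t) :
    ∀ t ≥ (0:ℝ), |u t - v t| ≤ Real.exp (α * t) * |u 0 - v 0| :=
  pathwise_contraction_of_additive_noise_cubic_general α w u v hu_cont hv_cont hu_eq hv_eq
end

section
/- Let α > 0 and set C := max{ (7/3)·α², 3⁷/4 + (9/4)·3^{1/3} }. Then for all real numbers v and z: (2α(v + z) − (v + z)³)·v ≤ C·(1 + z² + z⁴). -/
/-- For `α > 0` and `C := max {(7/3) α², 3⁷/4 + (9/4) · 3^{1/3}}`, one has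
`(2α(v + z) − (v + z)³) v ≤ C (1 + z² + z⁴)` for all real `v`, `z`. -/
theorem dissipativity_estimate (α : ℝ) (hα : 0 < α) (v z : ℝ) :
    (2 * α * (v + z) - (v + z) ^ 3) * v ≤
      max ((7 / 3) * α ^ 2) ((3:ℝ) ^ 7 / 4 + (9 / 4) * (3:ℝ) ^ ((1:ℝ) / 3)) *
        (1 + z ^ 2 + z ^ 4) := by
  set C := max ((7 / 3) * α ^ 2) ((3:ℝ) ^ 7 / 4 + (9 / 4) * (3:ℝ) ^ ((1:ℝ) / 3)) with hC
  have hr : (1:ℝ) ≤ (3:ℝ) ^ ((1:ℝ) / 3) :=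
    Real.one_le_rpow (by norm_num) (by norm_num)
  have hC1 : (7 / 3) * α ^ 2 ≤ C := le_max_left _ _
  have hC2 : (549:ℝ) ≤ C := by
    refine le_trans ?_ (le_max_right _ _)
    nlinarith [hr]
  have hz : (0:ℝ) ≤ z ^ 2 + z ^ 4 := by positivity
  have key : (2 * α * (v + z) - (v + z) ^ 3) * v ≤
      (7 / 3) * α ^ 2 + 549 * (z ^ 2 + z ^ 4) := by
    nlinarith [sq_nonneg (7 * α - 3 * ((v + z) ^ 2 - (v + z) * z)),
      sq_nonneg ((v + z) ^ 2 - z ^ 2), sq_nonneg ((v + z) * z),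
      sq_nonneg ((v + z) ^ 2 - (v + z) * z), sq_nonneg (v + z), sq_nonneg z,
      sq_nonneg ((v + z) ^ 2), sq_nonneg (z ^ 2), mul_pos hα hα, hα.le]
  have hfinal : (7 / 3) * α ^ 2 + 549 * (z ^ 2 + z ^ 4) ≤ C * (1 + z ^ 2 + z ^ 4) := by
    have h1 : C * (1 + z ^ 2 + z ^ 4) = C * 1 + C * (z ^ 2 + z ^ 4) := by ring
    rw [h1]
    have := mul_le_mul_of_nonneg_right hC2 hz
    linarith
  linarith
end

section
/- Let α > 0 and let x₀ ∈ [0, √α + 1]. Suppose x : [0, 1] → ℝ is continuous and satisfies x(t) = x₀ + ∫₀ᵗ (α·x(s) − x(s)³) ds − 2(α^{3/2} + 1)·t for all t ∈ [0, 1]. Then there exists t ∈ [0, 1] with x(t) ≤ 0; in particular, since x(0) = x₀ ≥ 0 and x is continuous, x has a zero in [0, 1]. -/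
open intervalIntegral

/-- For `α > 0` and `x₀ ∈ [0, √α + 1]`, the solution of
`x(t) = x₀ + ∫₀ᵗ (α x(s) − x(s)³) ds − 2(α^{3/2} + 1) t` on `[0, 1]` reaches `(-∞, 0]`;
in particular, since `x(0) = x₀ ≥ 0` and `x` is continuous, `x` has a zero in `[0, 1]`. -/
theorem reaches_zero_in_unit_time
    (α : ℝ) (hα : 0 < α) (x₀ : ℝ) (hx₀ : 0 ≤ x₀) (hx₀' : x₀ ≤ Real.sqrt α + 1)
    (x : ℝ → ℝ) (hx_cont : ContinuousOn x (Set.Icc 0 1))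
    (hx_eq : ∀ t ∈ Set.Icc (0:ℝ) 1,
      x t = x₀ + (∫ s in (0:ℝ)..t, (α * x s - x s ^ 3)) - 2 * (α * Real.sqrt α + 1) * t) :
    (∃ t ∈ Set.Icc (0:ℝ) 1, x t ≤ 0) ∧ (∃ t ∈ Set.Icc (0:ℝ) 1, x t = 0) := by
  have hs0 : 0 ≤ Real.sqrt α := Real.sqrt_nonneg α
  have hs2 : Real.sqrt α ^ 2 = α := Real.sq_sqrt hα.le
  set s := Real.sqrt α with hs
  have hx0 : x 0 = x₀ := by
    have := hx_eq 0 (by norm_num)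
    simpa using this
  have key : ∃ t ∈ Set.Icc (0:ℝ) 1, x t ≤ 0 := by
    by_contra h
    push_neg at h
    have hcont' : ContinuousOn (fun u => α * x u - x u ^ 3) (Set.uIcc (0:ℝ) 1) := by
      rw [Set.uIcc_of_le (by norm_num : (0:ℝ) ≤ 1)]
      exact (continuousOn_const.mul hx_cont).sub (hx_cont.pow 3)
    have hint : IntervalIntegrable (fun u => α * x u - x u ^ 3)
        MeasureTheory.volume 0 1 := hcont'.intervalIntegrable
    have hbound : (∫ u in (0:ℝ)..1, (α * x u - x u ^ 3)) ≤ α * s := by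
      calc (∫ u in (0:ℝ)..1, (α * x u - x u ^ 3)) ≤ ∫ _ in (0:ℝ)..1, α * s := by
            apply intervalIntegral.integral_mono_on (by norm_num) hint
              intervalIntegrable_const
            intro u hu
            have hxu := (h u hu).le
            nlinarith [mul_nonneg (sq_nonneg (x u - s)) (add_nonneg hxu hs0),
              mul_nonneg (sq_nonneg (x u)) hs0]
        _ = α * s := by simp
    have h1 := hx_eq 1 (by norm_num)
    have hx1 := h 1 (by norm_num)
    nlinarith [mul_nonneg hs0 (sq_nonneg (s - 1)), sq_nonneg (s - 1/2)]
  refine ⟨key, ?_⟩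
  obtain ⟨t₀, ht₀, hle⟩ := key
  have hsub : Set.Icc (0:ℝ) t₀ ⊆ Set.Icc (0:ℝ) 1 :=
    Set.Icc_subset_Icc le_rfl ht₀.2
  have hivt := intermediate_value_Icc' ht₀.1 (hx_cont.mono hsub)
  have h0mem : (0:ℝ) ∈ Set.Icc (x t₀) (x 0) := ⟨hle, by rw [hx0]; exact hx₀⟩
  obtain ⟨c, hc, hc0⟩ := hivt h0mem
  exact ⟨c, hsub hc, hc0⟩
end
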